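/- arXiv:1502.04375 — 4 statements merged into one kernel-verified Lean document; each statement's English description precedes it below -/
import Mathlib

section
/- Let G = (ℝ, +) act on X = ℝ² by g · (t,s) = (t, t·g + s), and let x : ℝ → ℝ² be x(t) = (t, 0). Then the isotropy set G_x = { (t,g) ∈ ℝ × ℝ : g · x(t) = x(t) } equals ({0} × ℝ) ∪ (ℝ \ {0} × {0}), this set is closed in ℝ², and the quotient map π : ℝ × ℝ → (ℝ × ℝ)/∼ for the equivalence relation (t,g) ∼ (t',g') ⟺ t = t' ∧ g · x(t) = g' · x(t), endowed with the quotient topology, is not an open map. -/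
/-!
In the coordinates `(t, g)` the orbit map is the shear `(t, g) ↦ g · x(t) = (t, t g)`, so the
isotropy is the zero set `{t g = 0}` and `∼` is the kernel relation of the shear. Saturating
the open half-plane `{g > 0}` adds the whole line `{t = 0}`, and the result contains `(0, 0)`
but none of the points `(t, 0)` with `t ≠ 0`, so it is not open.
-/

open Set

section KernelQuotient

variable {X Y : Type*} {r : X → X → Prop} (f : X → Y)

lemma quot_mk_eq_iff_of_forall_iff (hr : ∀ p q, r p q ↔ f p = f q) {p q : X} :
    Quot.mk r p = Quot.mk r q ↔ f p = f q := by
  have hequiv : Equivalence r :=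
    ⟨fun p => (hr p p).2 rfl, fun h => (hr _ _).2 ((hr _ _).1 h).symm,
      fun h₁ h₂ => (hr _ _).2 (((hr _ _).1 h₁).trans ((hr _ _).1 h₂))⟩
  rw [Quot.eq, hequiv.eqvGen_iff, hr]

lemma isOpen_preimage_image_of_isOpenMap_quot_mk [TopologicalSpace X]
    (hr : ∀ p q, r p q ↔ f p = f q) (hopen : IsOpenMap (Quot.mk r)) {U : Set X}
    (hU : IsOpen U) : IsOpen (f ⁻¹' (f '' U)) := by
  have hsat : Quot.mk r ⁻¹' (Quot.mk r '' U) = f ⁻¹' (f '' U) := by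
    ext q
    simp only [mem_preimage, mem_image, quot_mk_eq_iff_of_forall_iff f hr]
  rw [← hsat, ← isOpen_coinduced]
  exact hopen U hU

end KernelQuotient

def shear (p : ℝ × ℝ) : ℝ × ℝ := (p.1, p.1 * p.2)

lemma shear_preimage_image_univ_prod_Ioi :
    shear ⁻¹' (shear '' (univ ×ˢ Ioi 0)) = {q : ℝ × ℝ | q.1 = 0 ∨ 0 < q.2} := by
  ext q
  simp only [mem_preimage, mem_image, mem_prod, mem_univ, true_and, mem_Ioi, mem_ofPred_eq,
    shear, Prod.ext_iff]
  constructor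
  · rintro ⟨p, hp, h₁, h₂⟩
    rcases eq_or_ne q.1 0 with hq | hq
    · exact Or.inl hq
    · rw [h₁] at h₂
      exact Or.inr (mul_left_cancel₀ hq h₂ ▸ hp)
  · rintro (hq | hq)
    · exact ⟨(q.1, 1), one_pos, rfl, by simp [hq]⟩
    · exact ⟨q, hq, rfl, rfl⟩

lemma not_isOpen_setOf_fst_eq_zero_or_snd_pos :
    ¬ IsOpen {q : ℝ × ℝ | q.1 = 0 ∨ 0 < q.2} := by
  intro h
  have hline : (fun t : ℝ => (t, (0 : ℝ))) ⁻¹' {q : ℝ × ℝ | q.1 = 0 ∨ 0 < q.2} = {0} := by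
    ext t
    simp
  exact not_isOpen_singleton (0 : ℝ) (hline ▸ h.preimage (by fun_prop))

/-- For the action of `(ℝ,+)` on `ℝ²` by `g · (t,s) = (t, tg + s)` and the point
`x(t) = (t,0)`: the isotropy is `({0} × ℝ) ∪ ((ℝ \ {0}) × {0})`, a closed set, but the
quotient map of `ℝ × ℝ` by the relation `(t,g) ∼ (t',g') ↔ t = t' ∧ g·x(t) = g'·x(t)`
is not an open map. -/
theorem stmt_4 (act : ℝ → ℝ × ℝ → ℝ × ℝ)
    (hact : ∀ g p, act g p = (p.1, p.1 * g + p.2))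
    (x : ℝ → ℝ × ℝ) (hx : ∀ t, x t = (t, 0))
    (r : ℝ × ℝ → ℝ × ℝ → Prop)
    (hr : ∀ p q : ℝ × ℝ, r p q ↔ p.1 = q.1 ∧ act p.2 (x p.1) = act q.2 (x p.1)) :
    {p : ℝ × ℝ | act p.2 (x p.1) = x p.1}
      = (({0} : Set ℝ) ×ˢ (Set.univ : Set ℝ)) ∪ ((({0} : Set ℝ)ᶜ) ×ˢ ({0} : Set ℝ)) ∧
    IsClosed {p : ℝ × ℝ | act p.2 (x p.1) = x p.1} ∧
    ¬ IsOpenMap (Quot.mk r) := by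
  have hisotropy : {p : ℝ × ℝ | act p.2 (x p.1) = x p.1} = {p | p.1 * p.2 = 0} := by
    ext p
    simp [hact, hx]
  have hr_shear : ∀ p q, r p q ↔ shear p = shear q := fun p q => by
    simp only [hr, hact, hx, shear, Prod.ext_iff, add_zero, true_and]
    exact and_congr_right fun h => by rw [h]
  refine ⟨?_, ?_, fun hopen => ?_⟩
  · ext p
    simp only [hisotropy, mem_ofPred_eq, mul_eq_zero, mem_union, mem_prod, mem_singleton_iff,
      mem_univ, mem_compl_iff, and_true]
    tauto
  · rw [hisotropy]
    exact isClosed_eq (by fun_prop) continuous_const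
  · refine not_isOpen_setOf_fst_eq_zero_or_snd_pos ?_
    rw [← shear_preimage_image_univ_prod_Ioi]
    exact isOpen_preimage_image_of_isOpenMap_quot_mk shear hr_shear hopen (isOpen_univ.prod isOpen_Ioi)
end

section
/- Let R be a local commutative ring with maximal ideal m and residue field k, let E be a finitely generated R-module, F a finite free R-module, and φ : E → F an R-linear map. If the induced k-linear map φ̄ : E/mE → F/mF is injective, then φ is injective and admits an R-linear left inverse; in particular E is a free R-module. -/
open IsLocalRing

/- Via `k ⊗ M ≃ M ⧸ 𝔪M`, the hypothesis is the injectivity of `k ⊗ φ`. Over a local ring, with `E`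
finite and `F` finite free, this makes `φ` a split injection (by Nakayama); `E` is then a direct
summand of `F`, hence projective, hence free. -/

theorem LinearMap.lTensor_quotient_injective_of_mem_smul_top {R M N : Type*} [CommRing R]
    [AddCommGroup M] [Module R M] [AddCommGroup N] [Module R N] (I : Ideal R) (f : M →ₗ[R] N)
    (hf : ∀ x : M, f x ∈ I • (⊤ : Submodule R N) → x ∈ I • (⊤ : Submodule R M)) :
    Function.Injective (f.lTensor (R ⧸ I)) := by
  rw [injective_iff_map_eq_zero]
  intro z hz
  obtain ⟨x, rfl⟩ := TensorProduct.mk_surjective R M (R ⧸ I) Ideal.Quotient.mk_surjective z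
  have hfx : f x ∈ I • (⊤ : Submodule R N) := by
    simpa using congrArg (TensorProduct.quotTensorEquivQuotSMul N I) hz
  rw [TensorProduct.mk_apply, ← TensorProduct.quotTensorEquivQuotSMul_symm_mk,
    (Submodule.Quotient.mk_eq_zero _).2 (hf x hfx), map_zero]

/-- Over a local ring `(R, m, k)`: if `φ : E → F` (with `E` finitely generated and `F`
finite free) induces an injective map `E/mE → F/mF` (equivalently, `φ x ∈ mF → x ∈ mE`),
then `φ` is injective, admits an `R`-linear left inverse, and `E` is free. -/
theorem stmt_5 {R : Type*} [CommRing R] [IsLocalRing R]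
    {E F : Type*} [AddCommGroup E] [Module R E] [AddCommGroup F] [Module R F]
    [Module.Finite R E] [Module.Free R F] [Module.Finite R F]
    (φ : E →ₗ[R] F)
    (hinj : ∀ x : E, φ x ∈ (maximalIdeal R) • (⊤ : Submodule R F) →
      x ∈ (maximalIdeal R) • (⊤ : Submodule R E)) :
    Function.Injective φ ∧ (∃ ψ : F →ₗ[R] E, ψ ∘ₗ φ = LinearMap.id) ∧ Module.Free R E := by
  obtain ⟨ψ, hψ⟩ := (split_injective_iff_lTensor_residueField_injective φ).2
    (φ.lTensor_quotient_injective_of_mem_smul_top (maximalIdeal R) hinj)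
  have : Module.Projective R E := .of_split φ ψ hψ
  exact ⟨Function.HasLeftInverse.injective ⟨ψ, LinearMap.congr_fun hψ⟩, ⟨ψ, hψ⟩,
    Module.free_of_flat_of_isLocalRing⟩
end

section
/- Let A be a (possibly noncommutative) ring and δ : A → A an additive map satisfying δ(fg) = δ(f)g + fδ(g) + δ(f)δ(g) for all f,g ∈ A. Let I ⊆ A be a two-sided ideal with δ(A) ⊆ I and δ(I) ⊆ I². Then δ(Iᵏ) ⊆ I^{k+1} for all k ≥ 1. Consequently, if I^{n+1} = 0 then δ^{n+1} = 0 and id + δ is bijective on A. -/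
open Pointwise

/-- The additive subgroup generated by products of elements of `P` and `Q`. -/
def agMul {A : Type*} [Ring A] (P Q : AddSubgroup A) : AddSubgroup A :=
  AddSubgroup.closure ((P : Set A) * (Q : Set A))

/-- Powers of an additive subgroup of a ring: `I⁰ = A`, `I¹ = I`, `I^{k+1} = I^k · I`. -/
def agPow {A : Type*} [Ring A] (I : AddSubgroup A) : ℕ → AddSubgroup A
  | 0 => ⊤
  | 1 => I
  | (k + 2) => agMul (agPow I (k + 1)) I

/-! Expanding `δ(pq)` for `p ∈ Iᵏ`, `q ∈ I` puts each of the three terms in `I^{k+2}`: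
`δ(p) q ∈ I^{k+1} I`, `p δ(q) ∈ Iᵏ I²` and `δ(p) δ(q) ∈ I^{k+1} I`, the last because `δ(A) ⊆ I`.
Iterating from `δ(A) ⊆ I` gives `δ^{n+1}(A) ⊆ I^{n+1} = 0`, so `δ` is nilpotent and `id + δ`
is a unit of `End(A)`. -/

section agPow

variable {A : Type*} [Ring A] {I : AddSubgroup A}

lemma agMul_le {P Q S : AddSubgroup A} (h : ∀ p ∈ P, ∀ q ∈ Q, p * q ∈ S) : agMul P Q ≤ S :=
  (AddSubgroup.closure_le S).2 (Set.mul_subset_iff.2 h)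

lemma mul_mem_agMul {P Q : AddSubgroup A} {a b : A} (ha : a ∈ P) (hb : b ∈ Q) :
    a * b ∈ agMul P Q :=
  AddSubgroup.subset_closure (Set.mul_mem_mul ha hb)

lemma agPow_succ (I : AddSubgroup A) {k : ℕ} (hk : k ≠ 0) :
    agPow I (k + 1) = agMul (agPow I k) I := by
  obtain ⟨m, rfl⟩ := Nat.exists_eq_succ_of_ne_zero hk
  rfl

lemma mul_mem_agPow {j k : ℕ} (hj : j ≠ 0) (hk : k ≠ 0) {a b : A}
    (ha : a ∈ agPow I j) (hb : b ∈ agPow I k) : a * b ∈ agPow I (j + k) := by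
  induction k, Nat.one_le_iff_ne_zero.2 hk using Nat.le_induction generalizing b with
  | base => rw [agPow_succ I hj]; exact mul_mem_agMul ha hb
  | succ k hk1 ih =>
    rw [agPow_succ I (by omega)] at hb
    refine agMul_le (S := (agPow I (j + (k + 1))).comap (AddMonoidHom.mulLeft a))
      (fun p hp q hq => ?_) hb
    have hapq : a * p * q ∈ agPow I (j + k + 1) := by
      rw [agPow_succ I (by omega)]
      exact mul_mem_agMul (ih (by omega) hp) hq
    simpa [mul_assoc, Nat.add_assoc] using hapq

end agPow

section deviation

variable {A : Type*} [Ring A] {δ : A →+ A} {I : AddSubgroup A}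

theorem map_mem_agPow_succ
    (hδmul : ∀ f g : A, δ (f * g) = δ f * g + f * δ g + δ f * δ g)
    (hδA : ∀ a : A, δ a ∈ I) (hδI : ∀ a ∈ I, δ a ∈ agPow I 2)
    {k : ℕ} (hk : 1 ≤ k) {a : A} (ha : a ∈ agPow I k) : δ a ∈ agPow I (k + 1) := by
  induction k, hk using Nat.le_induction generalizing a with
  | base => exact hδI a ha
  | succ k hk ih =>
    rw [agPow_succ I (by omega)] at ha
    refine agMul_le (S := (agPow I (k + 2)).comap δ) (fun p hp q hq => ?_) ha
    have hδp := ih hp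
    have hδpq : δ p * q ∈ agPow I (k + 2) := mul_mem_agPow (by omega) one_ne_zero hδp hq
    have hpδq : p * δ q ∈ agPow I (k + 2) := mul_mem_agPow (by omega) two_ne_zero hp (hδI q hq)
    have hδpδq : δ p * δ q ∈ agPow I (k + 2) :=
      mul_mem_agPow (by omega) one_ne_zero hδp (hδA q)
    show δ (p * q) ∈ agPow I (k + 2)
    rw [hδmul]
    exact add_mem (add_mem hδpq hpδq) hδpδq

theorem iterate_mem_agPow
    (hδmul : ∀ f g : A, δ (f * g) = δ f * g + f * δ g + δ f * δ g)
    (hδA : ∀ a : A, δ a ∈ I) (hδI : ∀ a ∈ I, δ a ∈ agPow I 2) (m : ℕ) (a : A) :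
    (⇑δ)^[m] a ∈ agPow I m := by
  induction m with
  | zero => exact AddSubgroup.mem_top a
  | succ m ih =>
    rw [Function.iterate_succ_apply']
    rcases Nat.eq_zero_or_pos m with rfl | hm
    · exact hδA a
    · exact map_mem_agPow_succ hδmul hδA hδI hm ih

end deviation

theorem AddMonoidHom.bijective_add_self_of_iterate_eq_zero {M : Type*} [AddCommGroup M]
    (δ : M →+ M) {n : ℕ} (h : ∀ a : M, (⇑δ)^[n] a = 0) :
    Function.Bijective (fun a : M => a + δ a) := by
  have hnil : IsNilpotent δ.toIntLinearMap :=
    ⟨n, LinearMap.ext fun a => (Module.End.pow_apply _ n a).trans (h a)⟩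
  exact (Module.End.isUnit_iff _).1 hnil.isUnit_one_add

theorem stmt_8_general {A : Type*} [Ring A] (δ : A →+ A)
    (hδmul : ∀ f g : A, δ (f * g) = δ f * g + f * δ g + δ f * δ g)
    (I : AddSubgroup A)
    (hδA : ∀ a : A, δ a ∈ I)
    (hδI : ∀ a ∈ I, δ a ∈ agPow I 2) :
    (∀ k : ℕ, 1 ≤ k → ∀ a ∈ agPow I k, δ a ∈ agPow I (k + 1)) ∧
    (∀ n : ℕ, agPow I (n + 1) = ⊥ →
      (∀ a : A, (⇑δ)^[n + 1] a = 0) ∧ Function.Bijective (fun a : A => a + δ a)) := by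
  refine ⟨fun k hk a ha => map_mem_agPow_succ hδmul hδA hδI hk ha, fun n hbot => ?_⟩
  have hzero : ∀ a : A, (⇑δ)^[n + 1] a = 0 := fun a => by
    simpa [hbot] using iterate_mem_agPow hδmul hδA hδI (n + 1) a
  exact ⟨hzero, δ.bijective_add_self_of_iterate_eq_zero hzero⟩

/-- If `δ : A → A` is additive with `δ(fg) = δ(f)g + fδ(g) + δ(f)δ(g)`, and `I` is a
two-sided ideal with `δ(A) ⊆ I` and `δ(I) ⊆ I²`, then `δ(Iᵏ) ⊆ I^{k+1}` for all `k ≥ 1`;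
consequently, if `I^{n+1} = 0`, then `δ^{n+1} = 0` and `id + δ` is bijective. -/
theorem stmt_8 {A : Type*} [Ring A] (δ : A →+ A)
    (hδmul : ∀ f g : A, δ (f * g) = δ f * g + f * δ g + δ f * δ g)
    (I : AddSubgroup A)
    (hIl : ∀ (r : A) (a : A), a ∈ I → r * a ∈ I)
    (hIr : ∀ (r : A) (a : A), a ∈ I → a * r ∈ I)
    (hδA : ∀ a : A, δ a ∈ I)
    (hδI : ∀ a ∈ I, δ a ∈ agPow I 2) :
    (∀ k : ℕ, 1 ≤ k → ∀ a ∈ agPow I k, δ a ∈ agPow I (k + 1)) ∧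
    (∀ n : ℕ, agPow I (n + 1) = ⊥ →
      (∀ a : A, (⇑δ)^[n + 1] a = 0) ∧ Function.Bijective (fun a : A => a + δ a)) :=
  stmt_8_general δ hδmul I hδA hδI
end

section
/- Let C be a category with finite products and terminal object, G a group object in C, X a G-space, and x : T → X a T-valued point such that the isotropy group object G_x is representable and the orbit π_x : G_T → G·x exists as a universal categorical quotient of G_T by the right G_x-action. Then there is a unique morphism a : G × (G·x) → G·x making π_x equivariant (a ∘ (id_G × π_x) = π_x ∘ m), this morphism is a group action of G on G·x, and the canonical point x : T → G·x is invariant under the action of G_x. -/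
/-!
Left multiplication `g · (t, g') = (t, g g')` on `G_T = T ⨯ G` commutes with the right
`G_x`-action, so `leftMul ≫ π` coequalizes the base change along `G` of the action groupoid;
universality of the quotient gives the unique `aQ`. The action laws hold on `G_T` and descend
to `Q` because `π` and its base changes are epimorphisms. For a point `h` of `G_x` over `(t, g)`,
`π` identifies `(t, g) = (t, 1) · h` with `(t, 1)`, whence `g · π(t, 1) = π(t, g) = π(t, 1)`.
-/

open CategoryTheory CategoryTheory.Limits

attribute [local simp] prod.lift_fst prod.lift_snd prod.lift_fst_assoc prod.lift_snd_assoc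

section Epi

variable {C : Type*} [Category C]

lemma epi_of_existsUnique_factor {A B Q : C} {p q : A ⟶ B}
    {π : B ⟶ Q} (hπ : p ≫ π = q ≫ π)
    (h : ∀ (Y : C) (f : B ⟶ Y), p ≫ f = q ≫ f → ∃! f' : Q ⟶ Y, π ≫ f' = f) : Epi π where
  left_cancellation u v huv := by
    obtain ⟨w, -, hw⟩ := h _ (π ≫ u) (by rw [reassoc_of% hπ])
    exact (hw u rfl).trans (hw v huv.symm).symm

variable [HasBinaryProducts C]

lemma epi_prod_map_id_prod_map_id {Z W A B : C} (f : A ⟶ B) [Epi (prod.map (𝟙 (Z ⨯ W)) f)] :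
    Epi (prod.map (𝟙 Z) (prod.map (𝟙 W) f)) := by
  have h : prod.map (𝟙 Z) (prod.map (𝟙 W) f) =
      (prod.associator Z W A).inv ≫ prod.map (𝟙 (Z ⨯ W)) f ≫ (prod.associator Z W B).hom := by
    rw [← prod.map_id_id, prod.associator_naturality, Iso.inv_hom_id_assoc]
  rw [h]
  infer_instance

end Epi

section GroupObjectAction

variable {C : Type*} [Category C] [HasFiniteProducts C] {G : C}
  (one : ⊤_ C ⟶ G) (mul : G ⨯ G ⟶ G)

noncomputable def mulFst (Y : C) : G ⨯ (G ⨯ Y) ⟶ G ⨯ Y :=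
  (prod.associator G G Y).inv ≫ prod.map mul (𝟙 Y)

@[simp]
lemma lift_lift_mulFst {R Y : C} (g g' : R ⟶ G) (y : R ⟶ Y) :
    prod.lift g (prod.lift g' y) ≫ mulFst mul Y = prod.lift (prod.lift g g' ≫ mul) y := by
  ext <;> simp [mulFst, prod.comp_lift_assoc]

lemma map_id_map_id_mulFst {Y Z : C} (f : Y ⟶ Z) :
    prod.map (𝟙 G) (prod.map (𝟙 G) f) ≫ mulFst mul Z = mulFst mul Y ≫ prod.map (𝟙 G) f := by
  ext <;> simp [mulFst, prod.comp_lift_assoc]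

structure IsAction {Y : C} (a : G ⨯ Y ⟶ Y) : Prop where
  one_act : prod.lift (terminal.from Y ≫ one) (𝟙 Y) ≫ a = 𝟙 Y
  mul_act : mulFst mul Y ≫ a = prod.map (𝟙 G) a ≫ a

variable {one mul}

namespace IsAction

variable {Y : C} {a : G ⨯ Y ⟶ Y}

lemma of_apply
    (h_one : ∀ (R : C) (y : R ⟶ Y), prod.lift (terminal.from R ≫ one) y ≫ a = y)
    (h_mul : ∀ (R : C) (g g' : R ⟶ G) (y : R ⟶ Y),
      prod.lift (prod.lift g g' ≫ mul) y ≫ a = prod.lift g (prod.lift g' y ≫ a) ≫ a) :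
    IsAction one mul a where
  one_act := h_one Y (𝟙 Y)
  mul_act := by
    have hsnd : prod.lift (prod.snd ≫ prod.fst) (prod.snd ≫ prod.snd) =
        (prod.snd : G ⨯ (G ⨯ Y) ⟶ G ⨯ Y) := by
      ext <;> simp
    simpa only [← lift_lift_mulFst, hsnd, prod.lift_fst_snd, Category.id_comp,
      ← prod.lift_fst_comp_snd_comp, Category.comp_id]
      using h_mul _ prod.fst (prod.snd ≫ prod.fst) (prod.snd ≫ prod.snd)

lemma one_act_apply (ha : IsAction one mul a) {R : C} (y : R ⟶ Y) :
    prod.lift (terminal.from R ≫ one) y ≫ a = y := by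
  have : prod.lift (terminal.from R ≫ one) y = y ≫ prod.lift (terminal.from Y ≫ one) (𝟙 Y) := by
    ext <;> simp [terminal.comp_from_assoc]
  rw [this, Category.assoc, ha.one_act, Category.comp_id]

lemma mul_act_apply (ha : IsAction one mul a) {R : C} (g g' : R ⟶ G) (y : R ⟶ Y) :
    prod.lift (prod.lift g g' ≫ mul) y ≫ a = prod.lift g (prod.lift g' y ≫ a) ≫ a := by
  rw [← lift_lift_mulFst, Category.assoc, ha.mul_act]
  simp

lemma of_epi (ha : IsAction one mul a) {Z : C} {b : G ⨯ Z ⟶ Z} (f : Y ⟶ Z) [Epi f]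
    [Epi (prod.map (𝟙 (G ⨯ G)) f)] (hf : prod.map (𝟙 G) f ≫ b = a ≫ f) :
    IsAction one mul b where
  one_act := by
    have hunit : f ≫ prod.lift (terminal.from Z ≫ one) (𝟙 Z) =
        prod.lift (terminal.from Y ≫ one) (𝟙 Y) ≫ prod.map (𝟙 G) f := by
      ext <;> simp [terminal.comp_from_assoc]
    rw [← cancel_epi f, reassoc_of% hunit, hf, reassoc_of% ha.one_act, Category.comp_id]
  mul_act := by
    have := epi_prod_map_id_prod_map_id (Z := G) (W := G) f

    rw [← cancel_epi (prod.map (𝟙 G) (prod.map (𝟙 G) f))]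
    calc prod.map (𝟙 G) (prod.map (𝟙 G) f) ≫ mulFst mul Z ≫ b
        = mulFst mul Y ≫ a ≫ f := by rw [reassoc_of% map_id_map_id_mulFst, hf]
      _ = prod.map (𝟙 G) a ≫ prod.map (𝟙 G) f ≫ b := by rw [reassoc_of% ha.mul_act, hf]
      _ = prod.map (𝟙 G) (prod.map (𝟙 G) f) ≫ prod.map (𝟙 G) b ≫ b := by
        rw [prod.map_map_assoc, prod.map_map_assoc, hf]

end IsAction

end GroupObjectAction

section Orbit

variable {C : Type*} [Category C] [HasFiniteProducts C] {G T Gx : C}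
  {one : ⊤_ C ⟶ G} {mul : G ⨯ G ⟶ G}

variable (mul) in
noncomputable def leftMul (T : C) : G ⨯ (T ⨯ G) ⟶ T ⨯ G :=
  prod.lift (prod.snd ≫ prod.fst) (prod.lift prod.fst (prod.snd ≫ prod.snd) ≫ mul)

@[simp]
lemma lift_lift_leftMul {R : C} (g : R ⟶ G) (t : R ⟶ T) (g' : R ⟶ G) :
    prod.lift g (prod.lift t g') ≫ leftMul mul T = prod.lift t (prod.lift g g' ≫ mul) := by
  ext <;> simp [leftMul, prod.comp_lift_assoc]

lemma isAction_leftMul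
    (hassoc : ∀ (R : C) (f g h : R ⟶ G),
      prod.lift (prod.lift f g ≫ mul) h ≫ mul = prod.lift f (prod.lift g h ≫ mul) ≫ mul)
    (hone_mul : ∀ (R : C) (f : R ⟶ G), prod.lift (terminal.from R ≫ one) f ≫ mul = f) :
    IsAction one mul (leftMul mul T) := by
  refine .of_apply (fun R y => ?_) (fun R g g' y => ?_)
  · ext <;> simp [leftMul, prod.comp_lift_assoc, hone_mul]
  · ext <;> simp [leftMul, prod.comp_lift_assoc, hassoc]

variable (one) in
noncomputable def unitSection (T : C) : T ⟶ T ⨯ G :=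
  prod.lift (𝟙 T) (terminal.from T ≫ one)

lemma comp_unitSection {R : C} (t : R ⟶ T) :
    t ≫ unitSection one T = prod.lift t (terminal.from R ≫ one) := by
  ext <;> simp [unitSection, terminal.comp_from_assoc]

variable (mul) in
noncomputable def rightMulIsotropy (j : Gx ⟶ T ⨯ G) : G ⨯ Gx ⟶ T ⨯ G :=
  prod.lift (prod.snd ≫ j ≫ prod.fst) (prod.lift prod.fst (prod.snd ≫ j ≫ prod.snd) ≫ mul)

noncomputable def forgetIsotropy (j : Gx ⟶ T ⨯ G) : G ⨯ Gx ⟶ T ⨯ G :=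
  prod.lift (prod.snd ≫ j ≫ prod.fst) prod.fst

variable (j : Gx ⟶ T ⨯ G)

lemma map_id_rightMulIsotropy_leftMul
    (hassoc : ∀ (R : C) (f g h : R ⟶ G),
      prod.lift (prod.lift f g ≫ mul) h ≫ mul = prod.lift f (prod.lift g h ≫ mul) ≫ mul) :
    prod.map (𝟙 G) (rightMulIsotropy mul j) ≫ leftMul mul T =
      mulFst mul Gx ≫ rightMulIsotropy mul j := by
  ext <;> simp [leftMul, rightMulIsotropy, mulFst, prod.comp_lift_assoc, hassoc]

lemma map_id_forgetIsotropy_leftMul :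
    prod.map (𝟙 G) (forgetIsotropy j) ≫ leftMul mul T = mulFst mul Gx ≫ forgetIsotropy j := by
  ext <;> simp [leftMul, forgetIsotropy, mulFst, prod.comp_lift_assoc]

lemma isotropy_comp_eq_unitSection_comp {Q : C} {π : T ⨯ G ⟶ Q}
    (hone_mul : ∀ (R : C) (f : R ⟶ G), prod.lift (terminal.from R ≫ one) f ≫ mul = f)
    (hπ : rightMulIsotropy mul j ≫ π = forgetIsotropy j ≫ π) {R : C} (h : R ⟶ Gx) :
    prod.lift (h ≫ j ≫ prod.fst) (h ≫ j ≫ prod.snd) ≫ π =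
      (h ≫ j ≫ prod.fst) ≫ unitSection one T ≫ π := by
  have hright : prod.lift (terminal.from R ≫ one) h ≫ rightMulIsotropy mul j =
      prod.lift (h ≫ j ≫ prod.fst) (h ≫ j ≫ prod.snd) := by
    ext <;> simp [rightMulIsotropy, prod.comp_lift_assoc, hone_mul]
  have hforget : prod.lift (terminal.from R ≫ one) h ≫ forgetIsotropy j =
      (h ≫ j ≫ prod.fst) ≫ unitSection one T := by
    rw [comp_unitSection]
    ext <;> simp [forgetIsotropy]
  rw [← hright, Category.assoc, hπ, ← Category.assoc, hforget, Category.assoc]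

lemma lift_comp_unitSection_comp_act {Q : C} {π : T ⨯ G ⟶ Q} {aQ : G ⨯ Q ⟶ Q}
    (hmul_one : ∀ (R : C) (f : R ⟶ G), prod.lift f (terminal.from R ≫ one) ≫ mul = f)
    (haQ : prod.map (𝟙 G) π ≫ aQ = leftMul mul T ≫ π) {R : C} (t : R ⟶ T) (g : R ⟶ G) :
    prod.lift g (t ≫ unitSection one T ≫ π) ≫ aQ = prod.lift t g ≫ π := by
  have hlift : prod.lift g (t ≫ unitSection one T ≫ π) =
      prod.lift g (t ≫ unitSection one T) ≫ prod.map (𝟙 G) π := by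
    simp [prod.lift_map]
  rw [hlift, Category.assoc, haQ, comp_unitSection, reassoc_of% lift_lift_leftMul, hmul_one]

end Orbit

theorem stmt_18_general {C : Type*} [Category C] [Limits.HasFiniteProducts C]
    (G T Gx Q : C)
    (one : ⊤_ C ⟶ G) (mul : G ⨯ G ⟶ G)
    -- group laws on points
    (hassoc : ∀ (R : C) (f g h : R ⟶ G),
      prod.lift (prod.lift f g ≫ mul) h ≫ mul = prod.lift f (prod.lift g h ≫ mul) ≫ mul)
    (hone_mul : ∀ (R : C) (f : R ⟶ G), prod.lift (terminal.from R ≫ one) f ≫ mul = f)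
    (hmul_one : ∀ (R : C) (f : R ⟶ G), prod.lift f (terminal.from R ≫ one) ≫ mul = f)
    -- `Gx` represents the isotropy functor: its points are pairs `(t, g)` with
    -- `g · x(t) = x(t)`
    (j : Gx ⟶ T ⨯ G)
    -- the two maps of the action groupoid of the right `Gx`-action on `G_T = T ⨯ G`,
    -- parametrized by `G ⨯ Gx`:  `(g, h) ↦ (t_h, g·g_h)` and `(g, h) ↦ (t_h, g)`
    (p q : G ⨯ Gx ⟶ T ⨯ G)
    (hp : p = prod.lift (prod.snd ≫ j ≫ prod.fst)
      (prod.lift prod.fst (prod.snd ≫ j ≫ prod.snd) ≫ mul))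
    (hq : q = prod.lift (prod.snd ≫ j ≫ prod.fst) prod.fst)
    -- `π : G_T ⟶ Q` is a universal categorical quotient: it coequalizes `p, q` and
    -- all its base changes `id_Z ⨯ π` are again coequalizers
    (π : T ⨯ G ⟶ Q)
    (hπ_eq : p ≫ π = q ≫ π)
    (hπ_coeq : ∀ (Y : C) (f : T ⨯ G ⟶ Y), p ≫ f = q ≫ f →
      ∃! f' : Q ⟶ Y, π ≫ f' = f)
    (hπ_univ : ∀ (Z Y : C) (f : Z ⨯ (T ⨯ G) ⟶ Y),
      prod.map (𝟙 Z) p ≫ f = prod.map (𝟙 Z) q ≫ f →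
      ∃! f' : Z ⨯ Q ⟶ Y, prod.map (𝟙 Z) π ≫ f' = f) :
    -- conclusion: a unique `G`-action on the orbit making `π` equivariant, and the
    -- canonical point of the orbit is `G_x`-invariant
    ∃! aQ : G ⨯ Q ⟶ Q,
      (prod.map (𝟙 G) π ≫ aQ
        = prod.lift (prod.snd ≫ prod.fst)
            (prod.lift prod.fst (prod.snd ≫ prod.snd) ≫ mul) ≫ π) ∧
      (∀ (R : C) (qp : R ⟶ Q), prod.lift (terminal.from R ≫ one) qp ≫ aQ = qp) ∧
      (∀ (R : C) (g g' : R ⟶ G) (qp : R ⟶ Q),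
        prod.lift (prod.lift g g' ≫ mul) qp ≫ aQ
          = prod.lift g (prod.lift g' qp ≫ aQ) ≫ aQ) ∧
      (∀ (R : C) (h : R ⟶ Gx),
        prod.lift (h ≫ j ≫ prod.snd)
            ((h ≫ j ≫ prod.fst) ≫ prod.lift (𝟙 T) (terminal.from T ≫ one) ≫ π) ≫ aQ
          = (h ≫ j ≫ prod.fst) ≫ prod.lift (𝟙 T) (terminal.from T ≫ one) ≫ π) := by
  obtain rfl : p = rightMulIsotropy mul j := hp
  obtain rfl : q = forgetIsotropy j := hq
  have hcoeq : prod.map (𝟙 G) (rightMulIsotropy mul j) ≫ leftMul mul T ≫ π =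
      prod.map (𝟙 G) (forgetIsotropy j) ≫ leftMul mul T ≫ π := by
    rw [reassoc_of% map_id_rightMulIsotropy_leftMul j hassoc,
      reassoc_of% map_id_forgetIsotropy_leftMul, hπ_eq]
  obtain ⟨aQ, haQ, huniq⟩ := hπ_univ G Q (leftMul mul T ≫ π) hcoeq
  have : Epi π := epi_of_existsUnique_factor hπ_eq hπ_coeq
  have : Epi (prod.map (𝟙 (G ⨯ G)) π) :=
    epi_of_existsUnique_factor (by rw [prod.map_map, prod.map_map, hπ_eq]) (hπ_univ (G ⨯ G))
  have hact : IsAction one mul aQ := (isAction_leftMul hassoc hone_mul).of_epi π haQ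
  refine ⟨aQ, ⟨haQ, fun _ => hact.one_act_apply, fun _ => hact.mul_act_apply, fun R h => ?_⟩,
    fun aQ' h => huniq aQ' h.1⟩
  exact (lift_comp_unitSection_comp_act hmul_one haQ _ _).trans
    (isotropy_comp_eq_unitSection_comp j hone_mul hπ_eq h)

/-- Proposition 'orbit-action': if the isotropy `G_x` is representable (via a morphism
`j : Gx ⟶ T ⨯ G`) and the orbit `π : T ⨯ G ⟶ Q` is a universal categorical quotient of
`G_T` by the right `G_x`-action, then there is a unique morphism `aQ : G ⨯ Q ⟶ Q` with
`(id_G ⨯ π) ≫ aQ = m ≫ π`; it is a `G`-action on `Q = G·x`, `π` is `G`-equivariant, and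
the canonical point of `G·x` is invariant under `G_x`. -/
theorem stmt_18 {C : Type*} [Category C] [Limits.HasFiniteProducts C]
    (G X T Gx Q : C)
    (one : ⊤_ C ⟶ G) (mul : G ⨯ G ⟶ G) (inv : G ⟶ G) (act : G ⨯ X ⟶ X)
    -- group laws on points
    (hassoc : ∀ (R : C) (f g h : R ⟶ G),
      prod.lift (prod.lift f g ≫ mul) h ≫ mul = prod.lift f (prod.lift g h ≫ mul) ≫ mul)
    (hone_mul : ∀ (R : C) (f : R ⟶ G), prod.lift (terminal.from R ≫ one) f ≫ mul = f)
    (hmul_one : ∀ (R : C) (f : R ⟶ G), prod.lift f (terminal.from R ≫ one) ≫ mul = f)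
    (hinv_mul : ∀ (R : C) (f : R ⟶ G),
      prod.lift (f ≫ inv) f ≫ mul = terminal.from R ≫ one)
    -- action laws on points
    (hone_act : ∀ (R : C) (y : R ⟶ X), prod.lift (terminal.from R ≫ one) y ≫ act = y)
    (hmul_act : ∀ (R : C) (g h : R ⟶ G) (y : R ⟶ X),
      prod.lift (prod.lift g h ≫ mul) y ≫ act = prod.lift g (prod.lift h y ≫ act) ≫ act)
    -- the `T`-valued point
    (x : T ⟶ X)
    -- `Gx` represents the isotropy functor: its points are pairs `(t, g)` with
    -- `g · x(t) = x(t)`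
    (j : Gx ⟶ T ⨯ G)
    (hj_mono : Mono j)
    (hj_prop : ∀ (R : C) (h : R ⟶ Gx),
      prod.lift (h ≫ j ≫ prod.snd) ((h ≫ j ≫ prod.fst) ≫ x) ≫ act
        = (h ≫ j ≫ prod.fst) ≫ x)
    (hj_lift : ∀ (R : C) (t : R ⟶ T) (g : R ⟶ G),
      prod.lift g (t ≫ x) ≫ act = t ≫ x → ∃! h : R ⟶ Gx, h ≫ j = prod.lift t g)
    -- the two maps of the action groupoid of the right `Gx`-action on `G_T = T ⨯ G`,
    -- parametrized by `G ⨯ Gx`:  `(g, h) ↦ (t_h, g·g_h)` and `(g, h) ↦ (t_h, g)`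
    (p q : G ⨯ Gx ⟶ T ⨯ G)
    (hp : p = prod.lift (prod.snd ≫ j ≫ prod.fst)
      (prod.lift prod.fst (prod.snd ≫ j ≫ prod.snd) ≫ mul))
    (hq : q = prod.lift (prod.snd ≫ j ≫ prod.fst) prod.fst)
    -- `π : G_T ⟶ Q` is a universal categorical quotient: it coequalizes `p, q` and
    -- all its base changes `id_Z ⨯ π` are again coequalizers
    (π : T ⨯ G ⟶ Q)
    (hπ_eq : p ≫ π = q ≫ π)
    (hπ_coeq : ∀ (Y : C) (f : T ⨯ G ⟶ Y), p ≫ f = q ≫ f →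
      ∃! f' : Q ⟶ Y, π ≫ f' = f)
    (hπ_univ : ∀ (Z Y : C) (f : Z ⨯ (T ⨯ G) ⟶ Y),
      prod.map (𝟙 Z) p ≫ f = prod.map (𝟙 Z) q ≫ f →
      ∃! f' : Z ⨯ Q ⟶ Y, prod.map (𝟙 Z) π ≫ f' = f) :
    -- conclusion: a unique `G`-action on the orbit making `π` equivariant, and the
    -- canonical point of the orbit is `G_x`-invariant
    ∃! aQ : G ⨯ Q ⟶ Q,
      (prod.map (𝟙 G) π ≫ aQ
        = prod.lift (prod.snd ≫ prod.fst)
            (prod.lift prod.fst (prod.snd ≫ prod.snd) ≫ mul) ≫ π) ∧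
      (∀ (R : C) (qp : R ⟶ Q), prod.lift (terminal.from R ≫ one) qp ≫ aQ = qp) ∧
      (∀ (R : C) (g g' : R ⟶ G) (qp : R ⟶ Q),
        prod.lift (prod.lift g g' ≫ mul) qp ≫ aQ
          = prod.lift g (prod.lift g' qp ≫ aQ) ≫ aQ) ∧
      (∀ (R : C) (h : R ⟶ Gx),
        prod.lift (h ≫ j ≫ prod.snd)
            ((h ≫ j ≫ prod.fst) ≫ prod.lift (𝟙 T) (terminal.from T ≫ one) ≫ π) ≫ aQ
          = (h ≫ j ≫ prod.fst) ≫ prod.lift (𝟙 T) (terminal.from T ≫ one) ≫ π) :=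
  stmt_18_general G T Gx Q one mul hassoc hone_mul hmul_one j p q hp hq π hπ_eq hπ_coeq hπ_univ
end
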